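/- Let 0<q<1, w∈ℂ∖{0}, and u := |w|·q/(1−q²). For n≥1 define d_n := 4·(u/q)^{2n} · Σ_{k=0, k≠n}^{2n} ((−1)^k/(k!·(2n−k)!)) · q^{2k}·(1−q^{2(k−n)})^{−2}. Then for every t>0, Σ_{n=1}^∞ |d_n|·t^{2n} ≤ 4·(1+q⁴)/(1−q²)² · (cosh(|w|·(1+q²)·t/(1−q²)) − 1); in particular the series Σ_{n=1}^∞ d_n·t^{2n} converges absolutely for every t>0. -/

import Mathlib

open Real

/-- The Taylor coefficients `d_n` of the regular part of the Podleś heat trace: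
`d_n = 4 (u/q)^{2n} Σ_{k=0,k≠n}^{2n} ((-1)^k/(k!(2n-k)!)) q^{2k} (1-q^{2(k-n)})^{-2}`,
where `u = |w| q/(1-q²)`. -/
noncomputable def dCoef (q : ℝ) (w : ℂ) (n : ℕ) : ℝ :=
  4 * ((‖w‖ * q / (1 - q ^ 2)) / q) ^ (2 * n) *
    ∑ k ∈ (Finset.range (2 * n + 1)).erase n,
      ((-1 : ℝ) ^ k / ((k.factorial : ℝ) * ((2 * n - k).factorial : ℝ))) *
        q ^ (2 * k) * ((1 - q ^ (2 * ((k : ℤ) - (n : ℤ)))) ^ 2)⁻¹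

open Finset Nat

/-! Each factor `(1 - q^{2(k-n)})⁻²` with `k ≠ n` is at most `(1 + q⁴)/(1 - q²)²`; once the signs
are dropped, the remaining sum over `k` is `(1 + q²)^{2n}/(2n)!` by the binomial theorem. So
`|d_n| t^{2n} ≤ 4 (1 + q⁴)/(1 - q²)² · x^{2n}/(2n)!` with `x = |w|(1 + q²)t/(1 - q²)`, and these
majorants are the Taylor coefficients of `4 (1 + q⁴)/(1 - q²)² (cosh x - 1)`. -/

-- The constant is the sum of the two one-sided bounds `1/(1 - x)²` (for `m > 0`) and
-- `x²/(1 - x)²` (for `m < 0`, where `x ^ m - 1 ≥ x⁻¹ - 1`).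
theorem inv_sq_one_sub_zpow_le {x : ℝ} (hx0 : 0 < x) (hx1 : x < 1) {m : ℤ} (hm : m ≠ 0) :
    ((1 - x ^ m) ^ 2)⁻¹ ≤ (1 + x ^ 2) / (1 - x) ^ 2 := by
  have hx : 0 < 1 - x := by linarith
  rcases hm.lt_or_gt with hneg | hpos
  · have hxm : x⁻¹ ≤ x ^ m := by
      simpa using zpow_le_zpow_right_of_le_one₀ hx0 hx1.le (show m ≤ -1 by omega)
    have hgap : (1 - x) / x ≤ x ^ m - 1 := by
      rw [sub_div, div_self hx0.ne', one_div]; linarith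
    calc ((1 - x ^ m) ^ 2)⁻¹ = ((x ^ m - 1) ^ 2)⁻¹ := by ring
      _ ≤ (((1 - x) / x) ^ 2)⁻¹ := by gcongr
      _ = x ^ 2 / (1 - x) ^ 2 := by rw [div_pow, inv_div]
      _ ≤ (1 + x ^ 2) / (1 - x) ^ 2 := by gcongr; linarith
  · have hxm : x ^ m ≤ x := by
      simpa using zpow_le_zpow_right_of_le_one₀ hx0 hx1.le (show 1 ≤ m by omega)
    calc ((1 - x ^ m) ^ 2)⁻¹ ≤ ((1 - x) ^ 2)⁻¹ := by gcongr
      _ = 1 / (1 - x) ^ 2 := (one_div _).symm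
      _ ≤ (1 + x ^ 2) / (1 - x) ^ 2 := by gcongr; nlinarith

theorem sum_range_pow_div_factorial_mul_factorial {K : Type*} [Field K] [CharZero K]
    (a : K) (N : ℕ) :
    ∑ k ∈ range (N + 1), a ^ k / ((k ! : K) * ((N - k)! : K)) = (1 + a) ^ N / (N ! : K) := by
  rw [add_comm (1 : K), add_pow, sum_div]
  refine sum_congr rfl fun k hk => ?_
  rw [one_pow, mul_one, Nat.cast_choose K (Nat.le_of_lt_succ (mem_range.1 hk))]
  have : (N ! : K) ≠ 0 := Nat.cast_ne_zero.2 (factorial_ne_zero N)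
  field_simp

theorem hasSum_cosh_sub_one (x : ℝ) :
    HasSum (fun n : ℕ => x ^ (2 * (n + 1)) / ((2 * (n + 1))! : ℝ)) (cosh x - 1) := by
  simpa using (hasSum_nat_add_iff' 1).2 (hasSum_cosh x)

theorem abs_dCoef_summand_le {q : ℝ} (hq : 0 < q) (hq1 : q < 1) {n k : ℕ} (hkn : k ≠ n) :
    |(-1 : ℝ) ^ k / ((k ! : ℝ) * ((2 * n - k)! : ℝ)) * q ^ (2 * k) *
        ((1 - q ^ (2 * ((k : ℤ) - (n : ℤ)))) ^ 2)⁻¹|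
      ≤ (1 + q ^ 4) / (1 - q ^ 2) ^ 2 * ((q ^ 2) ^ k / ((k ! : ℝ) * ((2 * n - k)! : ℝ))) := by
  have hsq : q ^ 2 < 1 := by nlinarith
  have hm : (k : ℤ) - n ≠ 0 := sub_ne_zero.2 (by exact_mod_cast hkn)
  have hbound : ((1 - q ^ (2 * ((k : ℤ) - n))) ^ 2)⁻¹ ≤ (1 + q ^ 4) / (1 - q ^ 2) ^ 2 := by
    have hpow : q ^ (2 * ((k : ℤ) - n)) = (q ^ 2) ^ ((k : ℤ) - n) := by
      rw [zpow_mul]; norm_cast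
    rw [hpow, show q ^ 4 = (q ^ 2) ^ 2 by ring]
    exact inv_sq_one_sub_zpow_le (by positivity) hsq hm
  calc _ = (q ^ 2) ^ k / ((k ! : ℝ) * ((2 * n - k)! : ℝ)) *
        ((1 - q ^ (2 * ((k : ℤ) - n))) ^ 2)⁻¹ := by
        rw [abs_mul, abs_of_nonneg (by positivity : (0 : ℝ) ≤ ((1 - q ^ (2 * ((k : ℤ) - n))) ^ 2)⁻¹),
          abs_mul, abs_div, abs_pow, abs_neg, abs_one, one_pow, abs_of_pos (by positivity),
          abs_of_pos (by positivity), ← pow_mul]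
        ring
    _ ≤ (q ^ 2) ^ k / ((k ! : ℝ) * ((2 * n - k)! : ℝ)) * ((1 + q ^ 4) / (1 - q ^ 2) ^ 2) := by
        gcongr
    _ = _ := mul_comm _ _

theorem abs_dCoef_le {q : ℝ} (hq : 0 < q) (hq1 : q < 1) (w : ℂ) (n : ℕ) :
    |dCoef q w n| ≤ 4 * ((1 + q ^ 4) / (1 - q ^ 2) ^ 2) *
      ((‖w‖ * (1 + q ^ 2) / (1 - q ^ 2)) ^ (2 * n) / ((2 * n)! : ℝ)) := by
  set C := (1 + q ^ 4) / (1 - q ^ 2) ^ 2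
  have hsq : 0 < 1 - q ^ 2 := by nlinarith
  have hscale : ‖w‖ * q / (1 - q ^ 2) / q = ‖w‖ / (1 - q ^ 2) := by field_simp
  have hsum : |∑ k ∈ (range (2 * n + 1)).erase n,
      (-1 : ℝ) ^ k / ((k ! : ℝ) * ((2 * n - k)! : ℝ)) * q ^ (2 * k) *
        ((1 - q ^ (2 * ((k : ℤ) - (n : ℤ)))) ^ 2)⁻¹|
      ≤ C * ((1 + q ^ 2) ^ (2 * n) / ((2 * n)! : ℝ)) :=
    calc _ ≤ ∑ k ∈ (range (2 * n + 1)).erase n,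
          |(-1 : ℝ) ^ k / ((k ! : ℝ) * ((2 * n - k)! : ℝ)) * q ^ (2 * k) *
            ((1 - q ^ (2 * ((k : ℤ) - (n : ℤ)))) ^ 2)⁻¹| := abs_sum_le_sum_abs _ _
      _ ≤ ∑ k ∈ (range (2 * n + 1)).erase n,
          C * ((q ^ 2) ^ k / ((k ! : ℝ) * ((2 * n - k)! : ℝ))) :=
        sum_le_sum fun k hk => abs_dCoef_summand_le hq hq1 (ne_of_mem_erase hk)
      _ ≤ ∑ k ∈ range (2 * n + 1), C * ((q ^ 2) ^ k / ((k ! : ℝ) * ((2 * n - k)! : ℝ))) :=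
        sum_le_sum_of_subset_of_nonneg (erase_subset _ _) fun _ _ _ => by positivity
      _ = C * ((1 + q ^ 2) ^ (2 * n) / ((2 * n)! : ℝ)) := by
        rw [← mul_sum, sum_range_pow_div_factorial_mul_factorial]
  rw [dCoef, hscale, abs_mul, abs_mul, abs_of_pos four_pos, abs_of_nonneg (by positivity)]
  calc _ ≤ 4 * (‖w‖ / (1 - q ^ 2)) ^ (2 * n) *
        (C * ((1 + q ^ 2) ^ (2 * n) / ((2 * n)! : ℝ))) := by gcongr
    _ = _ := by rw [mul_div_right_comm, mul_pow]; ring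

theorem dCoef_series_bound_general (q : ℝ) (hq : 0 < q) (hq1 : q < 1)
    (w : ℂ) (t : ℝ) :
    Summable (fun n : ℕ => |dCoef q w (n + 1)| * t ^ (2 * (n + 1))) ∧
    (∑' n : ℕ, |dCoef q w (n + 1)| * t ^ (2 * (n + 1)))
      ≤ 4 * (1 + q ^ 4) / (1 - q ^ 2) ^ 2 *
        (Real.cosh (‖w‖ * (1 + q ^ 2) * t / (1 - q ^ 2)) - 1) := by
  set x := ‖w‖ * (1 + q ^ 2) * t / (1 - q ^ 2)
  have ht (n : ℕ) : 0 ≤ t ^ (2 * (n + 1)) := (even_two_mul _).pow_nonneg t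
  have hterm (n : ℕ) : |dCoef q w (n + 1)| * t ^ (2 * (n + 1))
      ≤ 4 * (1 + q ^ 4) / (1 - q ^ 2) ^ 2 * (x ^ (2 * (n + 1)) / ((2 * (n + 1))! : ℝ)) :=
    calc _ ≤ 4 * ((1 + q ^ 4) / (1 - q ^ 2) ^ 2) *
          ((‖w‖ * (1 + q ^ 2) / (1 - q ^ 2)) ^ (2 * (n + 1)) / ((2 * (n + 1))! : ℝ)) *
          t ^ (2 * (n + 1)) := by
          gcongr
          · exact ht n
          · exact abs_dCoef_le hq hq1 w _
      _ = _ := by simp only [x]; rw [mul_div_right_comm _ t, mul_pow]; ring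
  have hcosh := (hasSum_cosh_sub_one x).mul_left (4 * (1 + q ^ 4) / (1 - q ^ 2) ^ 2)
  have hsummable :=
    Summable.of_nonneg_of_le (fun n => mul_nonneg (abs_nonneg _) (ht n)) hterm hcosh.summable
  exact ⟨hsummable, hasSum_le hterm hsummable.hasSum hcosh⟩

/-- for every `t > 0`,
`Σ_{n≥1} |d_n| t^{2n} ≤ 4 (1+q⁴)/(1-q²)² (cosh(|w|(1+q²)t/(1-q²)) − 1)`; in particular
the series `Σ_{n≥1} d_n t^{2n}` converges absolutely. -/
theorem dCoef_series_bound (q : ℝ) (hq : 0 < q) (hq1 : q < 1)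
    (w : ℂ) (hw : w ≠ 0) (t : ℝ) (ht : 0 < t) :
    Summable (fun n : ℕ => |dCoef q w (n + 1)| * t ^ (2 * (n + 1))) ∧
    (∑' n : ℕ, |dCoef q w (n + 1)| * t ^ (2 * (n + 1)))
      ≤ 4 * (1 + q ^ 4) / (1 - q ^ 2) ^ 2 *
        (Real.cosh (‖w‖ * (1 + q ^ 2) * t / (1 - q ^ 2)) - 1) :=
  dCoef_series_bound_general q hq hq1 w t
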